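/- Let A be a symmetric positive definite real 3×3 matrix, u ∈ ℝ³ a unit vector, γ, k_R, k_ω, k_θ > 0, and J a symmetric positive definite 3×3 matrix. Let R : ℝ → ℝ^{3×3}, θ : ℝ → ℝ, ω : ℝ → ℝ³, t₀ ∈ ℝ, and let Σ be a 3×3 matrix with Σᵀ = −Σ. Write R₀ := R(t₀), θ₀ := θ(t₀), ω₀ := ω(t₀), and ψ₀ := ψ(A·T(R₀,θ₀)). Suppose at t₀: R has derivative R₀·ω₀^×; θ has derivative −k_θ(γθ₀ + 2uᵀψ₀); and ω has derivative J⁻¹(Σω₀ − 2k_R·Ra(θ₀,u)ψ₀ − k_ω ω₀). Then the map t ↦ k_R·U(R(t),θ(t)) + (1/2)ω(t)ᵀJω(t) has derivative −k_ω‖ω₀‖² − k_R k_θ (γθ₀ + 2uᵀψ₀)² at t₀. -/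

import Mathlib

open Matrix

noncomputable section

abbrev M3 : Type := Matrix (Fin 3) (Fin 3) ℝ
abbrev V3 : Type := Fin 3 → ℝ

/-- skew-symmetric matrix associated to `x`: `skew x *ᵥ y = x ×₃ y`. -/
def skew (x : V3) : M3 :=
  !![0, -x 2, x 1; x 2, 0, -x 0; -x 1, x 0, 0]

/-- the special orthogonal group SO(3) as a subset of 3×3 matrices -/
def SO3 : Set M3 := {R | Rᵀ * R = 1 ∧ R.det = 1}

/-- Rodrigues formula -/
def Ra (θ : ℝ) (u : V3) : M3 :=
  1 + Real.sin θ • skew u + (1 - Real.cos θ) • (skew u * skew u)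

/-- `psi M = vec (P_a M)`, the vector part of the antisymmetric projection -/
def psi (M : M3) : V3 :=
  ![(M 2 1 - M 1 2) / 2, (M 0 2 - M 2 0) / 2, (M 1 0 - M 0 1) / 2]

/-- the angular-warping transformation `T(R,θ) = R · Ra(θ,u)` -/
def Tmap (u : V3) (R : M3) (θ : ℝ) : M3 := R * Ra θ u

/-- the potential function `U(R,θ)` on SO(3) × ℝ -/
def Ufun (A : M3) (u : V3) (γ : ℝ) (R : M3) (θ : ℝ) : ℝ :=
  (A * (1 - Tmap u R θ)).trace + γ / 2 * θ ^ 2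

/-- Euclidean norm on ℝ³ -/
def enorm3 (x : V3) : ℝ := Real.sqrt (x ⬝ᵥ x)

/-- Frobenius norm of a 3×3 matrix -/
def fnorm (M : M3) : ℝ := Real.sqrt ((Mᵀ * M).trace)

/-- `E(M) := (tr(M) I − Mᵀ)/2` -/
def Emap (M : M3) : M3 := (2⁻¹ : ℝ) • (M.trace • (1 : M3) - Mᵀ)

/-- `D_R(R,θ)` from Lemma 2 -/
def DR (A : M3) (u : V3) (R : M3) (θ : ℝ) : M3 :=
  Ra θ u * Emap (A * Tmap u R θ) * (Ra θ u)ᵀ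

/-- `D_θ(R,θ)` from Lemma 2 -/
def Dθ (A : M3) (u : V3) (R : M3) (θ : ℝ) : V3 :=
  (Ra θ u * Emap (A * Tmap u R θ)) *ᵥ u - skew (Ra θ u *ᵥ psi (A * Tmap u R θ)) *ᵥ u

/-- Δ(v,u) from the construction of the synergistic gap -/
def Delta (A : M3) (v u : V3) : ℝ :=
  u ⬝ᵥ ((A.trace • (1 : M3) - A - (2 * (v ⬝ᵥ A *ᵥ v)) • ((1 : M3) - vecMulVec v v)) *ᵥ u)

/-- `v` is a unit eigenvector of `A` -/
def IsUnitEigen (A : M3) (v : V3) : Prop :=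
  v ⬝ᵥ v = 1 ∧ ∃ lam : ℝ, A *ᵥ v = lam • v

/-- Ā := (tr(A) I − A)/2 -/
def Abar (A : M3) : M3 := (2⁻¹ : ℝ) • (A.trace • (1 : M3) - A)

/-- `lam` is an eigenvalue of `M` -/
def IsEigen (M : M3) (lam : ℝ) : Prop := ∃ w : V3, w ≠ 0 ∧ M *ᵥ w = lam • w
attribute [local instance] Matrix.normedAddCommGroup Matrix.normedSpace

/-!
Along the flow, `d/dt U = 2 ω·(Ra ψ) + θ' (γθ + 2 u·ψ)` and `d/dt (½ ωᵀJω) = ω·(J ω')`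
`= ω·(Σω − 2k_R Ra ψ − k_ω ω)`: the cross terms `±2k_R ω·(Ra ψ)` cancel, `ω·Σω = 0` by
skew-symmetry, and substituting `θ'` leaves the claimed expression.

The gradient of `U` comes from `tr(M x^×) = −2 x·ψ(M)` and the equivariance
`Qᵀ x^× Q = (Qᵀx)^×` for `Q ∈ SO(3)` (the cofactor identity `Qa × Qb = adj(Q)ᵀ (a × b)`),
applied to `Q = Ra(θ,u)`. This matrix is a rotation since `Ra(a,u) Ra(b,u) = Ra(a+b,u)` (using
`(u^×)³ = −u^×`) and `Ra(θ,u)ᵀ = Ra(−θ,u)`; its determinant is `det Ra(θ/2,u)² ≥ 0`, hence `1`.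
-/

lemma skew_mulVec (x y : V3) : skew x *ᵥ y = x ⨯₃ y := by
  ext i; fin_cases i <;>
    simp only [skew, cross_apply, mulVec, dotProduct, Fin.sum_univ_three, of_apply, cons_val',
      cons_val_fin_one, cons_val_zero, cons_val_one, cons_val, Fin.isValue, Fin.zero_eta,
      Fin.mk_one, Fin.reduceFinMk, Nat.succ_eq_add_one, Nat.reduceAdd] <;>
    ring

lemma skew_transpose (x : V3) : (skew x)ᵀ = -skew x := by
  ext i j; fin_cases i <;> fin_cases j <;> simp [skew]

lemma trace_mul_skew (M : M3) (x : V3) : (M * skew x).trace = -2 * (x ⬝ᵥ psi M) := by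
  simp only [skew, psi, trace_fin_three, mul_apply, dotProduct, Fin.sum_univ_three, of_apply,
    cons_val', cons_val_fin_one, cons_val_zero, cons_val_one, cons_val, Fin.isValue]
  ring

lemma cross_mulVec_mulVec (Q : M3) (a b : V3) :
    (Q *ᵥ a) ⨯₃ (Q *ᵥ b) = (adjugate Q)ᵀ *ᵥ (a ⨯₃ b) := by
  ext i; fin_cases i <;>
    simp only [adjugate_fin_three, transpose_apply, cross_apply, mulVec, dotProduct,
      Fin.sum_univ_three, of_apply, cons_val', cons_val_fin_one, cons_val_zero, cons_val_one,
      cons_val, Fin.isValue, Fin.zero_eta, Fin.mk_one, Fin.reduceFinMk, Nat.succ_eq_add_one,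
      Nat.reduceAdd] <;>
    ring

section SO3

variable {Q : M3} (hQ : Q ∈ SO3)
include hQ

lemma mul_transpose_of_mem_SO3 : Q * Qᵀ = 1 := mul_eq_one_comm.mp hQ.1

lemma transpose_mem_SO3 : Qᵀ ∈ SO3 :=
  ⟨by rw [transpose_transpose, mul_transpose_of_mem_SO3 hQ], by rw [det_transpose, hQ.2]⟩

lemma adjugate_of_mem_SO3 : adjugate Q = Qᵀ := by
  calc adjugate Q = Qᵀ * Q * adjugate Q := by rw [hQ.1, one_mul]
    _ = Qᵀ := by rw [mul_assoc, mul_adjugate, hQ.2, one_smul, mul_one]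

lemma mulVec_cross_of_mem_SO3 (a b : V3) : Q *ᵥ (a ⨯₃ b) = (Q *ᵥ a) ⨯₃ (Q *ᵥ b) := by
  rw [cross_mulVec_mulVec, adjugate_of_mem_SO3 hQ, transpose_transpose]

lemma transpose_mul_skew_mul_of_mem_SO3 (w : V3) : Qᵀ * skew w * Q = skew (Qᵀ *ᵥ w) := by
  refine ext_iff_mulVec.mpr fun y => ?_
  rw [← mulVec_mulVec, ← mulVec_mulVec, skew_mulVec, skew_mulVec,
    mulVec_cross_of_mem_SO3 (transpose_mem_SO3 hQ), mulVec_mulVec, hQ.1, one_mulVec]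

lemma trace_mul_skew_mul_of_mem_SO3 (B : M3) (w : V3) :
    (B * skew w * Q).trace = -2 * (w ⬝ᵥ Q *ᵥ psi (B * Q)) := by
  have : B * skew w * Q = B * Q * skew (Qᵀ *ᵥ w) := by
    simp only [← transpose_mul_skew_mul_of_mem_SO3 hQ, ← mul_assoc]
    rw [mul_assoc B Q, mul_transpose_of_mem_SO3 hQ, mul_one]
  rw [this, trace_mul_skew, mulVec_transpose, dotProduct_mulVec]

end SO3

section Rodrigues

variable {u : V3}

lemma skew_mul_skew_mul_skew (hu : u ⬝ᵥ u = 1) : skew u * skew u * skew u = -skew u := by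
  refine ext_iff_mulVec.mpr fun y => ?_
  rw [← mulVec_mulVec, ← mulVec_mulVec, neg_mulVec, skew_mulVec, skew_mulVec, skew_mulVec,
    cross_cross_eq_smul_sub_smul', dot_self_cross, hu, zero_smul, one_smul, zero_sub]

lemma Ra_zero (u : V3) : Ra 0 u = 1 := by simp [Ra]

lemma Ra_transpose (θ : ℝ) (u : V3) : (Ra θ u)ᵀ = Ra (-θ) u := by
  simp [Ra, skew_transpose]

lemma Ra_mul_Ra (hu : u ⬝ᵥ u = 1) (a b : ℝ) : Ra a u * Ra b u = Ra (a + b) u := by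
  have h3 := skew_mul_skew_mul_skew hu
  simp only [Ra, add_mul, mul_add, mul_one, one_mul, smul_mul_assoc, mul_smul_comm,
    ← mul_assoc, h3, neg_mul, Real.sin_add, Real.cos_add]
  module

lemma Ra_mem_SO3 (hu : u ⬝ᵥ u = 1) (θ : ℝ) : Ra θ u ∈ SO3 := by
  have horth : (Ra θ u)ᵀ * Ra θ u = 1 := by
    rw [Ra_transpose, Ra_mul_Ra hu, neg_add_cancel, Ra_zero]
  refine ⟨horth, ?_⟩
  have hsq : (Ra θ u).det ^ 2 = 1 := by
    have := congrArg det horth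
    rwa [det_mul, det_transpose, det_one, ← sq] at this
  have hnonneg : 0 ≤ (Ra θ u).det := by
    rw [← add_halves θ, ← Ra_mul_Ra hu, det_mul]
    exact mul_self_nonneg _
  exact (pow_eq_one_iff_of_nonneg hnonneg two_ne_zero).mp hsq

lemma Ra_mul_skew (hu : u ⬝ᵥ u = 1) (θ : ℝ) :
    Ra θ u * skew u = Real.cos θ • skew u + Real.sin θ • (skew u * skew u) := by
  simp only [Ra, add_mul, one_mul, smul_mul_assoc, skew_mul_skew_mul_skew hu]
  module

lemma hasDerivAt_Ra (hu : u ⬝ᵥ u = 1) (θ : ℝ) :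
    HasDerivAt (fun θ => Ra θ u) (Ra θ u * skew u) θ := by
  rw [Ra_mul_skew hu]
  refine (((hasDerivAt_const θ (1 : M3)).fun_add
    ((Real.hasDerivAt_sin θ).smul_const (skew u))).fun_add
    (((hasDerivAt_const θ (1 : ℝ)).fun_sub (Real.hasDerivAt_cos θ)).smul_const
      (skew u * skew u))).congr_deriv ?_
  module

end Rodrigues

section MatrixCalculus

variable {𝕜 : Type*} [NontriviallyNormedField 𝕜] {l m n : Type*} {t : 𝕜}

lemma HasDerivAt.matrix_apply [Fintype m] [Fintype n] {F : 𝕜 → Matrix m n 𝕜} {F' : Matrix m n 𝕜}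
    (h : HasDerivAt F F' t) (i : m) (j : n) : HasDerivAt (fun s => F s i j) (F' i j) t :=
  hasDerivAt_pi.mp (hasDerivAt_pi.mp h i) j

lemma HasDerivAt.matrix_mul [Fintype l] [Fintype m] [Fintype n]
    {A : 𝕜 → Matrix l m 𝕜} {B : 𝕜 → Matrix m n 𝕜} {A' : Matrix l m 𝕜} {B' : Matrix m n 𝕜}
    (hA : HasDerivAt A A' t) (hB : HasDerivAt B B' t) :
    HasDerivAt (fun s => A s * B s) (A' * B t + A t * B') t :=
  hasDerivAt_pi.mpr fun i => hasDerivAt_pi.mpr fun j =>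
    (HasDerivAt.fun_sum fun k _ => (hA.matrix_apply i k).mul (hB.matrix_apply k j)).congr_deriv
      Finset.sum_add_distrib

lemma HasDerivAt.matrix_trace [Fintype n] {F : 𝕜 → Matrix n n 𝕜} {F' : Matrix n n 𝕜}
    (h : HasDerivAt F F' t) : HasDerivAt (fun s => (F s).trace) F'.trace t :=
  HasDerivAt.fun_sum fun i _ => h.matrix_apply i i

lemma HasDerivAt.dotProduct [Fintype n] {f g : 𝕜 → n → 𝕜} {f' g' : n → 𝕜}
    (hf : HasDerivAt f f' t) (hg : HasDerivAt g g' t) :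
    HasDerivAt (fun s => f s ⬝ᵥ g s) (f' ⬝ᵥ g t + f t ⬝ᵥ g') t :=
  (HasDerivAt.fun_sum fun k _ => (hasDerivAt_pi.mp hf k).mul (hasDerivAt_pi.mp hg k)).congr_deriv
    Finset.sum_add_distrib

lemma HasDerivAt.const_mulVec [Fintype m] [Fintype n] (J : Matrix m n 𝕜)
    {f : 𝕜 → n → 𝕜} {f' : n → 𝕜} (hf : HasDerivAt f f' t) :
    HasDerivAt (fun s => J *ᵥ f s) (J *ᵥ f') t :=
  hasDerivAt_pi.mpr fun i =>
    HasDerivAt.fun_sum fun k _ => (hasDerivAt_pi.mp hf k).const_mul (J i k)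

end MatrixCalculus

lemma dotProduct_mulVec_self_eq_zero {n R : Type*} [Fintype n] [CommRing R]
    [IsAddTorsionFree R] {S : Matrix n n R} (hS : Sᵀ = -S) (x : n → R) : x ⬝ᵥ S *ᵥ x = 0 := by
  refine self_eq_neg.mp ?_
  calc x ⬝ᵥ S *ᵥ x = Sᵀ *ᵥ x ⬝ᵥ x := by rw [mulVec_transpose, dotProduct_mulVec]
    _ = -(x ⬝ᵥ S *ᵥ x) := by rw [hS, neg_mulVec, neg_dotProduct, dotProduct_comm]

lemma hasDerivAt_half_dotProduct_mulVec {n : Type*} [Fintype n] {J : Matrix n n ℝ}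
    (hJ : J.IsSymm) {ω : ℝ → n → ℝ} {ω' : n → ℝ} {t : ℝ} (hω : HasDerivAt ω ω' t) :
    HasDerivAt (fun s => 1 / 2 * (ω s ⬝ᵥ J *ᵥ ω s)) (ω t ⬝ᵥ J *ᵥ ω') t := by
  refine ((hω.dotProduct (hω.const_mulVec J)).const_mul (1 / 2)).congr_deriv ?_
  have hsymm : ω' ⬝ᵥ J *ᵥ ω t = ω t ⬝ᵥ J *ᵥ ω' := by
    rw [dotProduct_comm, dotProduct_mulVec, ← mulVec_transpose, hJ.eq]
  rw [hsymm]
  ring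

section Potential

variable {u : V3} (hu : u ⬝ᵥ u = 1) {R : ℝ → M3} {θ : ℝ → ℝ} {w : V3} {θ' t₀ : ℝ}
  (hR : HasDerivAt R (R t₀ * skew w) t₀) (hθ : HasDerivAt θ θ' t₀)
include hu hR hθ

lemma hasDerivAt_Tmap :
    HasDerivAt (fun t => Tmap u (R t) (θ t))
      (R t₀ * skew w * Ra (θ t₀) u + θ' • (Tmap u (R t₀) (θ t₀) * skew u)) t₀ := by
  refine (hR.matrix_mul ((hasDerivAt_Ra hu (θ t₀)).scomp t₀ hθ)).congr_deriv ?_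
  simp only [Tmap, Function.comp_apply, mul_assoc, mul_smul_comm]

lemma hasDerivAt_Ufun (A : M3) (γ : ℝ) :
    HasDerivAt (fun t => Ufun A u γ (R t) (θ t))
      (2 * (w ⬝ᵥ Ra (θ t₀) u *ᵥ psi (A * Tmap u (R t₀) (θ t₀)))
        + θ' * (γ * θ t₀ + 2 * (u ⬝ᵥ psi (A * Tmap u (R t₀) (θ t₀))))) t₀ := by
  have htrace := ((hasDerivAt_const t₀ A).matrix_mul
    ((hasDerivAt_const t₀ 1).fun_sub (hasDerivAt_Tmap hu hR hθ))).matrix_trace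
  refine (htrace.fun_add ((hθ.pow 2).const_mul (γ / 2))).congr_deriv ?_
  rw [zero_mul, zero_add, zero_sub, mul_neg, trace_neg, mul_add, trace_add, ← mul_assoc,
    ← mul_assoc, trace_mul_skew_mul_of_mem_SO3 (Ra_mem_SO3 hu _), mul_smul_comm, trace_smul,
    ← mul_assoc, trace_mul_skew, Tmap, mul_assoc, smul_eq_mul]
  ring

end Potential

theorem lyapunov_decrease_basic_general
    (A : M3) (u : V3) (hu : u ⬝ᵥ u = 1)
    (γ kR kω kθ : ℝ)
    (J : M3) (hJ : J.PosDef)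
    (R : ℝ → M3) (θ : ℝ → ℝ) (ω : ℝ → V3) (t₀ : ℝ)
    (Sm : M3) (hSm : Smᵀ = -Sm)
    (psi0 : V3) (hpsi0 : psi0 = psi (A * Tmap u (R t₀) (θ t₀)))
    (hR : HasDerivAt R (R t₀ * skew (ω t₀)) t₀)
    (hθ : HasDerivAt θ (-(kθ * (γ * θ t₀ + 2 * (u ⬝ᵥ psi0)))) t₀)
    (hω : HasDerivAt ω
      (J⁻¹ *ᵥ (Sm *ᵥ ω t₀ - (2 * kR) • (Ra (θ t₀) u *ᵥ psi0) - kω • ω t₀)) t₀) :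
    HasDerivAt (fun t => kR * Ufun A u γ (R t) (θ t) + 1 / 2 * (ω t ⬝ᵥ J *ᵥ ω t))
      (-(kω * (ω t₀ ⬝ᵥ ω t₀)) - kR * kθ * (γ * θ t₀ + 2 * (u ⬝ᵥ psi0)) ^ 2) t₀ := by
  subst hpsi0
  have hpot := (hasDerivAt_Ufun hu hR hθ A γ).const_mul kR
  have hkin := hasDerivAt_half_dotProduct_mulVec (isHermitian_iff_isSymm.mp hJ.isHermitian) hω
  refine (hpot.fun_add hkin).congr_deriv ?_
  rw [mulVec_mulVec, mul_nonsing_inv _ ((isUnit_iff_isUnit_det J).mp hJ.isUnit), one_mulVec,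
    dotProduct_sub, dotProduct_sub, dotProduct_mulVec_self_eq_zero hSm, dotProduct_smul,
    dotProduct_smul, smul_eq_mul, smul_eq_mul]
  ring

theorem lyapunov_decrease_basic
    (A : M3) (hA : A.PosDef) (u : V3) (hu : u ⬝ᵥ u = 1)
    (γ kR kω kθ : ℝ) (hγ : 0 < γ) (hkR : 0 < kR) (hkω : 0 < kω) (hkθ : 0 < kθ)
    (J : M3) (hJ : J.PosDef)
    (R : ℝ → M3) (θ : ℝ → ℝ) (ω : ℝ → V3) (t₀ : ℝ)
    (Sm : M3) (hSm : Smᵀ = -Sm)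
    (psi0 : V3) (hpsi0 : psi0 = psi (A * Tmap u (R t₀) (θ t₀)))
    (hR : HasDerivAt R (R t₀ * skew (ω t₀)) t₀)
    (hθ : HasDerivAt θ (-(kθ * (γ * θ t₀ + 2 * (u ⬝ᵥ psi0)))) t₀)
    (hω : HasDerivAt ω
      (J⁻¹ *ᵥ (Sm *ᵥ ω t₀ - (2 * kR) • (Ra (θ t₀) u *ᵥ psi0) - kω • ω t₀)) t₀) :
    HasDerivAt (fun t => kR * Ufun A u γ (R t) (θ t) + 1 / 2 * (ω t ⬝ᵥ J *ᵥ ω t))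
      (-(kω * (ω t₀ ⬝ᵥ ω t₀)) - kR * kθ * (γ * θ t₀ + 2 * (u ⬝ᵥ psi0)) ^ 2) t₀ :=
  lyapunov_decrease_basic_general A u hu γ kR kω kθ J hJ R θ ω t₀ Sm hSm psi0 hpsi0 hR hθ hω
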